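/- arXiv:2503.07092 — 3 statements merged into one kernel-verified Lean document; each statement's English description precedes it below -/
import Mathlib

section
/- (Multiplier characterization of informativity for closed-loop stability.) Under the stated assumptions, the data are informative for closed-loop stability with respect to K if and only if there exist a radially unbounded V ∈ 𝒱 and functions γ, β : ℝⁿ → ℝ such that for all x ∈ ℝⁿ \ {0}: γ(x) ≥ 0, β(x) > 0, and the symmetric (1+ℓ)×(1+ℓ) matrix [[2 L_sᵀ(x) v_s, L_s̄ᵀ(x)],[L_s̄(x), 0]] − γ(x) N − [[β(x), 0],[0, 0]] is positive semidefinite, where L_s(x) and L_s̄(x) denote the subvectors of L(x) with entries indexed by s and s̄, respectively. -/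
open Matrix Kronecker MvPolynomial Filter

noncomputable section

/-- Index type for the stacked parameter vector `v = [vec(Aᵀ); vec(Bᵀ)] ∈ ℝ^(n(f+g))`:
`inl (i, a)` indexes the entry `A i a` and `inr (i, b)` the entry `B i b`. -/
abbrev ParamIdx (n f g : ℕ) := (Fin n × Fin f) ⊕ (Fin n × Fin g)

/-- The parameter vector `v = [vec(Aᵀ); vec(Bᵀ)]` of a system `(A, B)`. -/
def paramVec {n f g : ℕ} (A : Matrix (Fin n) (Fin f) ℝ) (B : Matrix (Fin n) (Fin g) ℝ) :
    ParamIdx n f g → ℝ :=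
  Sum.elim (fun p => A p.1 p.2) (fun p => B p.1 p.2)

/-- The data matrix `D = [Iₙ ⊗ 𝓕 ; Iₙ ⊗ 𝓗] ∈ ℝ^(n(f+g) × nT)`. -/
def Dmat {n f g T : ℕ} (F : Matrix (Fin f) (Fin T) ℝ) (H : Matrix (Fin g) (Fin T) ℝ) :
    Matrix (ParamIdx n f g) (Fin n × Fin T) ℝ :=
  Matrix.fromRows ((1 : Matrix (Fin n) (Fin n) ℝ) ⊗ₖ F)
    ((1 : Matrix (Fin n) (Fin n) ℝ) ⊗ₖ H)

/-- The set `Σ` of systems `(A, B)` compatible with the data `(Ẋ, 𝓕, 𝓗)`, the noise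
bound `‖vec(Wᵀ)‖² ≤ Φ₁₁`, and the prior knowledge that the entries of `v` indexed by
`s` equal `vs`. -/
def SigmaSet {n f g T : ℕ} (Xd : Matrix (Fin n) (Fin T) ℝ) (F : Matrix (Fin f) (Fin T) ℝ)
    (H : Matrix (Fin g) (Fin T) ℝ) (Φ11 : ℝ) (s : Finset (ParamIdx n f g))
    (vs : {i // i ∈ s} → ℝ) :
    Set (Matrix (Fin n) (Fin f) ℝ × Matrix (Fin n) (Fin g) ℝ) :=
  {AB | (∀ i : {i // i ∈ s}, paramVec AB.1 AB.2 i.1 = vs i) ∧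
    ∃ W : Matrix (Fin n) (Fin T) ℝ,
      (∑ i, ∑ t, W i t ^ 2) ≤ Φ11 ∧ Xd = AB.1 * F + AB.2 * H + W}

/-- The matrix `M = [[1, 0], [vec(Ẋᵀ) − D_{s•}ᵀ v_s, −D_{s̄•}ᵀ]]`. -/
def Mmat {n f g T : ℕ} (Xd : Matrix (Fin n) (Fin T) ℝ) (F : Matrix (Fin f) (Fin T) ℝ)
    (H : Matrix (Fin g) (Fin T) ℝ) (s : Finset (ParamIdx n f g))
    (vs : {i // i ∈ s} → ℝ) :
    Matrix (Unit ⊕ (Fin n × Fin T)) (Unit ⊕ {i // i ∈ sᶜ}) ℝ :=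
  Matrix.fromBlocks (Matrix.of fun _ _ => 1) 0
    (Matrix.of fun p _ =>
      Xd p.1 p.2 -
        (((Dmat F H).submatrix (fun i : {i // i ∈ s} => i.1) id)ᵀ *ᵥ vs) p)
    (-((Dmat F H).submatrix (fun i : {i // i ∈ sᶜ} => i.1) id)ᵀ)

/-- The matrix `diag(Φ₁₁, −I_{nT})`. -/
def PhiMat {n T : ℕ} (Φ11 : ℝ) :
    Matrix (Unit ⊕ (Fin n × Fin T)) (Unit ⊕ (Fin n × Fin T)) ℝ :=
  Matrix.fromBlocks (Matrix.of fun _ _ => Φ11) 0 0 (-1)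

/-- The data-based matrix `N = Mᵀ diag(Φ₁₁, −I_{nT}) M ∈ 𝕊^(1+ℓ)`. -/
def Nmat {n f g T : ℕ} (Xd : Matrix (Fin n) (Fin T) ℝ) (F : Matrix (Fin f) (Fin T) ℝ)
    (H : Matrix (Fin g) (Fin T) ℝ) (Φ11 : ℝ) (s : Finset (ParamIdx n f g))
    (vs : {i // i ∈ s} → ℝ) :
    Matrix (Unit ⊕ {i // i ∈ sᶜ}) (Unit ⊕ {i // i ∈ sᶜ}) ℝ :=
  (Mmat Xd F H s vs)ᵀ * PhiMat (n := n) (T := T) Φ11 * Mmat Xd F H s vs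

/-- The symmetric block matrix `[[c, lᵀ], [l, M]]` over an index type `Unit ⊕ κ`. -/
def bmatI {κ : Type} (c : ℝ) (l : κ → ℝ) (M : Matrix κ κ ℝ) :
    Matrix (Unit ⊕ κ) (Unit ⊕ κ) ℝ :=
  Matrix.fromBlocks (Matrix.of fun _ _ => c) (Matrix.of fun _ j => l j)
    (Matrix.of fun i _ => l i) M

/-- Evaluation of the gradient (`i`-th partial derivative) of a polynomial `V` at `x`. -/
def gradEval {n : ℕ} (V : MvPolynomial (Fin n) ℝ) (x : Fin n → ℝ) (i : Fin n) : ℝ :=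
  eval x (pderiv i V)

/-- `V ∈ 𝒱` (`V(0) = 0`, `V(x) > 0` for `x ≠ 0`) and `V` is radially unbounded. -/
def IsLyapCandidate {n : ℕ} (V : MvPolynomial (Fin n) ℝ) : Prop :=
  eval (0 : Fin n → ℝ) V = 0 ∧ (∀ x : Fin n → ℝ, x ≠ 0 → 0 < eval x V) ∧
    Tendsto (fun x : Fin n → ℝ => eval x V) (cocompact _) atTop

/-- The vector `L(x) = [−Iₙ ⊗ F(x); −Iₙ ⊗ (G(x)K(x))] (∂V/∂x)ᵀ(x) ∈ ℝ^(n(f+g))`, so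
that `L(x)ᵀ v = −(∂V/∂x)(x)(A F(x) + B G(x)K(x))`. -/
def Lvec {n m f g : ℕ} (Fp : Fin f → MvPolynomial (Fin n) ℝ)
    (Gp : Fin g → Fin m → MvPolynomial (Fin n) ℝ) (K : (Fin n → ℝ) → Fin m → ℝ)
    (V : MvPolynomial (Fin n) ℝ) (x : Fin n → ℝ) : ParamIdx n f g → ℝ :=
  Sum.elim (fun p => -(eval x (Fp p.2)) * gradEval V x p.1)
    (fun p => -(∑ j, eval x (Gp p.2 j) * K x j) * gradEval V x p.1)

/-- The data are informative for closed-loop stability with respect to `K`: there is a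
radially unbounded `V ∈ 𝒱` with `(∂V/∂x)(x)(A F(x) + B G(x)K(x)) < 0` for all `x ≠ 0`
and all `(A, B) ∈ Σ`. -/
def InformativeCL {n m f g T : ℕ} (Xd : Matrix (Fin n) (Fin T) ℝ)
    (Fd : Matrix (Fin f) (Fin T) ℝ) (Hd : Matrix (Fin g) (Fin T) ℝ) (Φ11 : ℝ)
    (s : Finset (ParamIdx n f g)) (vs : {i // i ∈ s} → ℝ)
    (Fp : Fin f → MvPolynomial (Fin n) ℝ) (Gp : Fin g → Fin m → MvPolynomial (Fin n) ℝ)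
    (K : (Fin n → ℝ) → Fin m → ℝ) : Prop :=
  ∃ V : MvPolynomial (Fin n) ℝ, IsLyapCandidate V ∧
    ∀ x : Fin n → ℝ, x ≠ 0 → ∀ AB ∈ SigmaSet Xd Fd Hd Φ11 s vs,
      (∑ i, gradEval V x i *
        ((∑ a, AB.1 i a * eval x (Fp a)) +
          ∑ b, AB.2 i b * ∑ j, eval x (Gp b j) * K x j)) < 0


section Helpers

open Matrix

variable {n f g T : ℕ}

lemma dotself_nonneg {P : Type} [Fintype P] (v : P → ℝ) : 0 ≤ v ⬝ᵥ v :=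
  Finset.sum_nonneg fun i _ => mul_self_nonneg _

lemma dotself_pos {P : Type} [Fintype P] {v : P → ℝ} (hv : v ≠ 0) : 0 < v ⬝ᵥ v :=
  lt_of_le_of_ne (dotself_nonneg v) (fun h => hv (dotProduct_self_eq_zero.mp h.symm))

lemma Dmat_apply_inl (Fd : Matrix (Fin f) (Fin T) ℝ) (Hd : Matrix (Fin g) (Fin T) ℝ)
    (p : Fin n × Fin f) (c : Fin n × Fin T) :
    Dmat Fd Hd (Sum.inl p) c = if p.1 = c.1 then Fd p.2 c.2 else 0 := by
  simp [Dmat, Matrix.fromRows_apply_inl, Matrix.fromRows_apply_inr, Matrix.kroneckerMap_apply, Matrix.one_apply, ite_mul]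

lemma Dmat_apply_inr (Fd : Matrix (Fin f) (Fin T) ℝ) (Hd : Matrix (Fin g) (Fin T) ℝ)
    (p : Fin n × Fin g) (c : Fin n × Fin T) :
    Dmat Fd Hd (Sum.inr p) c = if p.1 = c.1 then Hd p.2 c.2 else 0 := by
  simp [Dmat, Matrix.fromRows_apply_inl, Matrix.fromRows_apply_inr, Matrix.kroneckerMap_apply, Matrix.one_apply, ite_mul]

lemma Dmat_sum (Fd : Matrix (Fin f) (Fin T) ℝ) (Hd : Matrix (Fin g) (Fin T) ℝ)
    (v : ParamIdx n f g → ℝ) (i : Fin n) (t : Fin T) :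
    ∑ p : ParamIdx n f g, Dmat Fd Hd p (i, t) * v p
      = (∑ a, Fd a t * v (Sum.inl (i, a))) + ∑ b, Hd b t * v (Sum.inr (i, b)) := by
  rw [Fintype.sum_sum_type]
  congr 1
  · rw [Fintype.sum_prod_type]
    rw [Finset.sum_eq_single i (fun i' _ hne => by simp [Dmat_apply_inl, hne])
      (by simp)]
    simp [Dmat_apply_inl]
  · rw [Fintype.sum_prod_type]
    rw [Finset.sum_eq_single i (fun i' _ hne => by simp [Dmat_apply_inr, hne])
      (by simp)]
    simp [Dmat_apply_inr]

lemma AFBH_eq (Fd : Matrix (Fin f) (Fin T) ℝ) (Hd : Matrix (Fin g) (Fin T) ℝ)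
    (A : Matrix (Fin n) (Fin f) ℝ) (B : Matrix (Fin n) (Fin g) ℝ) (i : Fin n) (t : Fin T) :
    (A * Fd + B * Hd) i t = ∑ p : ParamIdx n f g, Dmat Fd Hd p (i, t) * paramVec A B p := by
  rw [Dmat_sum]
  simp [Matrix.add_apply, Matrix.mul_apply, paramVec, mul_comm]

lemma sum_split (s : Finset (ParamIdx n f g)) (u w : ParamIdx n f g → ℝ) :
    ∑ p : ParamIdx n f g, u p * w p
      = (fun i : {i // i ∈ s} => u i.1) ⬝ᵥ (fun i : {i // i ∈ s} => w i.1)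
        + (fun i : {i // i ∈ sᶜ} => u i.1) ⬝ᵥ (fun i : {i // i ∈ sᶜ} => w i.1) := by
  rw [dotProduct, dotProduct, Finset.sum_coe_sort s (fun p => u p * w p),
    Finset.sum_coe_sort sᶜ (fun p => u p * w p), Finset.sum_add_sum_compl]

end Helpers

section Helpers2

open Matrix

variable {n f g T : ℕ}

lemma resid_eq (Xd : Matrix (Fin n) (Fin T) ℝ) (Fd : Matrix (Fin f) (Fin T) ℝ)
    (Hd : Matrix (Fin g) (Fin T) ℝ) (s : Finset (ParamIdx n f g)) (vs : {i // i ∈ s} → ℝ)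
    (A : Matrix (Fin n) (Fin f) ℝ) (B : Matrix (Fin n) (Fin g) ℝ)
    (hs : ∀ i : {i // i ∈ s}, paramVec A B i.1 = vs i)
    (w : {i // i ∈ sᶜ} → ℝ) (hw : ∀ j : {i // i ∈ sᶜ}, paramVec A B j.1 = w j)
    (p : Fin n × Fin T) :
    Xd p.1 p.2 - (A * Fd + B * Hd) p.1 p.2
      = (Xd p.1 p.2 - (((Dmat Fd Hd).submatrix (fun i : {i // i ∈ s} => i.1) id)ᵀ *ᵥ vs) p)
        - (((Dmat Fd Hd).submatrix (fun i : {i // i ∈ sᶜ} => i.1) id)ᵀ *ᵥ w) p := by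
  have h1 : (A * Fd + B * Hd) p.1 p.2
      = (((Dmat Fd Hd).submatrix (fun i : {i // i ∈ s} => i.1) id)ᵀ *ᵥ vs) p
        + (((Dmat Fd Hd).submatrix (fun i : {i // i ∈ sᶜ} => i.1) id)ᵀ *ᵥ w) p := by
    rw [show p = (p.1, p.2) from rfl, AFBH_eq,
      sum_split s (fun q => Dmat Fd Hd q (p.1, p.2)) (paramVec A B)]
    congr 1
    · rw [mulVec]
      congr 1
      ext j
      simp [transpose_apply, submatrix_apply, hs j]
    · rw [mulVec]
      congr 1
      ext j
      simp [transpose_apply, submatrix_apply, hw j]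
  rw [h1]; ring

lemma derivSum_eq {m : ℕ} (Fp : Fin f → MvPolynomial (Fin n) ℝ)
    (Gp : Fin g → Fin m → MvPolynomial (Fin n) ℝ)
    (K : (Fin n → ℝ) → Fin m → ℝ) (V : MvPolynomial (Fin n) ℝ) (x : Fin n → ℝ)
    (A : Matrix (Fin n) (Fin f) ℝ) (B : Matrix (Fin n) (Fin g) ℝ) :
    (∑ i, gradEval V x i * ((∑ a, A i a * MvPolynomial.eval x (Fp a))
        + ∑ b, B i b * ∑ j, MvPolynomial.eval x (Gp b j) * K x j))
      = -(∑ p : ParamIdx n f g, Lvec Fp Gp K V x p * paramVec A B p) := by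
  rw [Fintype.sum_sum_type]
  simp only [Lvec, Sum.elim_inl, Sum.elim_inr, paramVec, Fintype.sum_prod_type,
    mul_add, Finset.sum_add_distrib, Finset.mul_sum, neg_add]
  congr 1
  · rw [← Finset.sum_neg_distrib]
    refine Finset.sum_congr rfl fun i _ => ?_
    rw [← Finset.sum_neg_distrib]
    exact Finset.sum_congr rfl fun a _ => by ring
  · rw [← Finset.sum_neg_distrib]
    refine Finset.sum_congr rfl fun i _ => ?_
    rw [← Finset.sum_neg_distrib]
    refine Finset.sum_congr rfl fun b _ => ?_
    rw [neg_mul, neg_mul, neg_neg, Finset.sum_mul, Finset.sum_mul]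
    exact Finset.sum_congr rfl fun j _ => by ring

lemma rows_indep (R : Matrix (Fin f ⊕ Fin g) (Fin T) ℝ)
    (hrank : R.rank = f + g) (c : Fin f ⊕ Fin g → ℝ)
    (h : ∀ t, ∑ u, c u * R u t = 0) : c = 0 := by
  have h1 : Rᵀ.rank = f + g := by rw [Matrix.rank_transpose]; exact hrank
  have hdom : Module.finrank ℝ ((Fin f ⊕ Fin g) → ℝ) = f + g := by
    simp [Module.finrank_pi]
  have h3 := LinearMap.finrank_range_add_finrank_ker Rᵀ.mulVecLin
  rw [hdom] at h3
  rw [Matrix.rank] at h1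
  have hker : Module.finrank ℝ (LinearMap.ker Rᵀ.mulVecLin) = 0 := by omega
  have hker' : LinearMap.ker Rᵀ.mulVecLin = ⊥ := Submodule.finrank_eq_zero.mp hker
  have hc : Rᵀ.mulVecLin c = 0 := by
    ext t
    have ht := h t
    rw [Fintype.sum_sum_type] at ht
    simpa [Matrix.mulVecLin_apply, Matrix.mulVec_transpose, Matrix.vecMul,
      dotProduct, Fintype.sum_sum_type, mul_comm] using ht
  have := hker' ▸ (LinearMap.mem_ker.mpr hc)
  simpa using this

lemma Esub_inj (Fd : Matrix (Fin f) (Fin T) ℝ) (Hd : Matrix (Fin g) (Fin T) ℝ)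
    (hrank : (Matrix.fromRows Fd Hd).rank = f + g) (s : Finset (ParamIdx n f g)) :
    ∀ xv : {i // i ∈ sᶜ} → ℝ,
      ((Dmat Fd Hd).submatrix (fun i : {i // i ∈ sᶜ} => i.1) id)ᵀ *ᵥ xv = 0 → xv = 0 := by
  intro xv hxv
  classical
  set c : ParamIdx n f g → ℝ := fun p => if hp : p ∈ sᶜ then xv ⟨p, hp⟩ else 0 with hc
  have hsum : ∀ q : Fin n × Fin T, ∑ p : ParamIdx n f g, Dmat Fd Hd p q * c p = 0 := by
    intro q
    have := congrFun hxv q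
    rw [mulVec] at this
    have h2 : (fun j : {i // i ∈ sᶜ} => ((Dmat Fd Hd).submatrix
        (fun i : {i // i ∈ sᶜ} => i.1) id)ᵀ q j) ⬝ᵥ xv
        = ∑ p : ParamIdx n f g, Dmat Fd Hd p q * c p := by
      rw [dotProduct]
      rw [show (∑ j : {i // i ∈ sᶜ}, ((Dmat Fd Hd).submatrix
          (fun i : {i // i ∈ sᶜ} => i.1) id)ᵀ q j * xv j)
        = ∑ j : {i // i ∈ sᶜ}, Dmat Fd Hd j.1 q * c j.1 from
          Finset.sum_congr rfl fun j _ => by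
            have hjs : j.1 ∉ s := Finset.mem_compl.mp j.2
            simp [hc, hjs]]
      rw [Finset.sum_coe_sort sᶜ (fun p => Dmat Fd Hd p q * c p)]
      rw [← Finset.sum_add_sum_compl s (fun p => Dmat Fd Hd p q * c p)]
      have : ∑ p ∈ s, Dmat Fd Hd p q * c p = 0 := by
        refine Finset.sum_eq_zero fun p hp => ?_
        have : c p = 0 := by simp [hc, hp]
        simp [this]
      rw [this, zero_add]
    rw [h2] at this
    exact this
  have hc0 : ∀ i : Fin n, (Sum.elim (fun a => c (Sum.inl (i, a)))
      (fun b => c (Sum.inr (i, b))) : Fin f ⊕ Fin g → ℝ) = 0 := by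
    intro i
    refine rows_indep _ hrank _ fun t => ?_
    rw [Fintype.sum_sum_type]
    have := hsum (i, t)
    rw [Dmat_sum] at this
    simpa [Matrix.fromRows_apply_inl, Matrix.fromRows_apply_inr, mul_comm] using this
  ext j
  have hj : c j.1 = xv j := by
    have hjs : j.1 ∉ s := Finset.mem_compl.mp j.2
    simp [hc, hjs]
  rcases hj' : j.1 with ⟨i, a⟩ | ⟨i, b⟩
  · have := congrFun (hc0 i) (Sum.inl a)
    simp only [Sum.elim_inl, Pi.zero_apply] at this
    rw [← hj, hj']
    simpa using this
  · have := congrFun (hc0 i) (Sum.inr b)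
    simp only [Sum.elim_inr, Pi.zero_apply] at this
    rw [← hj, hj']
    simpa using this

end Helpers2

section Helpers3

open Matrix

variable {n f g T : ℕ}

lemma bmatI_qf {κ : Type} [Fintype κ] (c : ℝ) (l : κ → ℝ) (z : Unit ⊕ κ → ℝ) :
    z ⬝ᵥ (bmatI c l 0 *ᵥ z)
      = c * z (Sum.inl ()) ^ 2 + 2 * z (Sum.inl ()) * (l ⬝ᵥ fun j => z (Sum.inr j)) := by
  rw [dotProduct, Fintype.sum_sum_type]
  simp only [bmatI, Matrix.mulVec, dotProduct, Fintype.sum_sum_type,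
    Matrix.fromBlocks_apply₁₁, Matrix.fromBlocks_apply₁₂, Matrix.fromBlocks_apply₂₁,
    Matrix.fromBlocks_apply₂₂, Matrix.of_apply, Matrix.zero_apply, zero_mul,
    Finset.sum_const_zero, add_zero, Finset.univ_unique, Finset.sum_singleton]
  simp only [show (default : Unit) = () from rfl]
  have h2 : ∑ x : κ, z (Sum.inr x) * (l x * z (Sum.inl ()))
      = z (Sum.inl ()) * ∑ x : κ, l x * z (Sum.inr x) := by
    rw [Finset.mul_sum]; exact Finset.sum_congr rfl fun i _ => by ring
  rw [h2]
  ring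

end Helpers3

section Helpers4

open Matrix

variable {n f g T : ℕ}

lemma Nmat_qf (Xd : Matrix (Fin n) (Fin T) ℝ) (Fd : Matrix (Fin f) (Fin T) ℝ)
    (Hd : Matrix (Fin g) (Fin T) ℝ) (s : Finset (ParamIdx n f g)) (vs : {i // i ∈ s} → ℝ)
    (Φ11 : ℝ) (z : Unit ⊕ {i // i ∈ sᶜ} → ℝ) :
    z ⬝ᵥ (Nmat Xd Fd Hd Φ11 s vs *ᵥ z)
      = Φ11 * z (Sum.inl ()) ^ 2
        - ∑ p : Fin n × Fin T,
            (z (Sum.inl ()) * (Xd p.1 p.2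
                - (((Dmat Fd Hd).submatrix (fun i : {i // i ∈ s} => i.1) id)ᵀ *ᵥ vs) p)
              - (((Dmat Fd Hd).submatrix (fun i : {i // i ∈ sᶜ} => i.1) id)ᵀ *ᵥ
                  fun j => z (Sum.inr j)) p) ^ 2 := by
  have h1 : Nmat Xd Fd Hd Φ11 s vs *ᵥ z
      = (Mmat Xd Fd Hd s vs)ᵀ *ᵥ (PhiMat Φ11 *ᵥ (Mmat Xd Fd Hd s vs *ᵥ z)) := by
    rw [Nmat, ← mulVec_mulVec, ← mulVec_mulVec]
  rw [h1, dotProduct_mulVec, vecMul_transpose]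
  set u := Mmat Xd Fd Hd s vs *ᵥ z with hu
  have hphi : u ⬝ᵥ (PhiMat Φ11 *ᵥ u)
      = Φ11 * u (Sum.inl ()) ^ 2 - ∑ p : Fin n × Fin T, u (Sum.inr p) ^ 2 := by
    rw [dotProduct, Fintype.sum_sum_type]
    simp only [PhiMat, Matrix.mulVec, dotProduct, Fintype.sum_sum_type,
      Matrix.fromBlocks_apply₁₁, Matrix.fromBlocks_apply₁₂, Matrix.fromBlocks_apply₂₁,
      Matrix.fromBlocks_apply₂₂, Matrix.of_apply, Matrix.zero_apply, zero_mul, mul_zero,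
      Finset.sum_const_zero, add_zero, zero_add, Finset.univ_unique, Finset.sum_singleton,
      Matrix.neg_apply, Matrix.one_apply, neg_mul, ite_mul, one_mul, zero_mul,
      Finset.sum_neg_distrib, Finset.sum_ite_eq, Finset.sum_ite_eq', Finset.mem_univ,
      if_true, show (default : Unit) = () from rfl]
    rw [Finset.sum_congr rfl fun p (_ : p ∈ Finset.univ) =>
      (by ring : u (Sum.inr p) * -u (Sum.inr p) = -(u (Sum.inr p) ^ 2)), Finset.sum_neg_distrib]
    ring
  rw [hphi]
  have hu0 : u (Sum.inl ()) = z (Sum.inl ()) := by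
    simp [hu, Mmat, Matrix.mulVec, dotProduct, Fintype.sum_sum_type,
      Matrix.fromBlocks_apply₁₁, Matrix.fromBlocks_apply₁₂]
  have hup : ∀ p : Fin n × Fin T, u (Sum.inr p)
      = z (Sum.inl ()) * (Xd p.1 p.2
          - (((Dmat Fd Hd).submatrix (fun i : {i // i ∈ s} => i.1) id)ᵀ *ᵥ vs) p)
        - (((Dmat Fd Hd).submatrix (fun i : {i // i ∈ sᶜ} => i.1) id)ᵀ *ᵥ
            fun j => z (Sum.inr j)) p := by
    intro p
    simp only [hu, Mmat, Matrix.mulVec, dotProduct, Fintype.sum_sum_type,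
      Matrix.fromBlocks_apply₂₁, Matrix.fromBlocks_apply₂₂, Matrix.of_apply,
      Matrix.neg_apply, Finset.univ_unique, Finset.sum_singleton, neg_mul,
      Finset.sum_neg_distrib]
    ring
  rw [hu0, Finset.sum_congr rfl fun p (_ : p ∈ Finset.univ) => congrArg (· ^ 2) (hup p)]

end Helpers4

section Helpers5

open Matrix

variable {n f g T : ℕ}

lemma bmatI_herm {κ : Type} [Fintype κ] (c : ℝ) (l : κ → ℝ) :
    (bmatI c l 0).IsHermitian := by
  show _ᴴ = _
  rw [conjTranspose_eq_transpose_of_trivial]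
  ext i j
  rcases i with i | i <;> rcases j with j | j <;>
    simp [bmatI, Matrix.transpose_apply, Matrix.fromBlocks_apply₁₁,
      Matrix.fromBlocks_apply₁₂, Matrix.fromBlocks_apply₂₁, Matrix.fromBlocks_apply₂₂]

lemma Nmat_herm (Xd : Matrix (Fin n) (Fin T) ℝ) (Fd : Matrix (Fin f) (Fin T) ℝ)
    (Hd : Matrix (Fin g) (Fin T) ℝ) (Φ11 : ℝ) (s : Finset (ParamIdx n f g))
    (vs : {i // i ∈ s} → ℝ) : (Nmat Xd Fd Hd Φ11 s vs).IsHermitian := by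
  have hphi : (PhiMat Φ11 : Matrix (Unit ⊕ (Fin n × Fin T)) _ ℝ).IsHermitian := by
    show _ᴴ = _
    rw [conjTranspose_eq_transpose_of_trivial]
    ext i j
    rcases i with i | i <;> rcases j with j | j <;>
      simp [PhiMat, Matrix.transpose_apply, Matrix.fromBlocks_apply₁₁,
        Matrix.fromBlocks_apply₁₂, Matrix.fromBlocks_apply₂₁, Matrix.fromBlocks_apply₂₂,
        Matrix.one_apply, eq_comm]
  have := Matrix.isHermitian_conjTranspose_mul_mul (Mmat Xd Fd Hd s vs) hphi
  rw [conjTranspose_eq_transpose_of_trivial] at this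
  exact this

lemma herm_smul {κ : Type} [Fintype κ] (γ : ℝ) {N : Matrix κ κ ℝ} (h : N.IsHermitian) :
    (γ • N).IsHermitian := by
  show _ᴴ = _
  rw [conjTranspose_smul, h.eq]
  simp

end Helpers5

section Core

open Matrix

lemma sq_nonneg_dot {P : Type} [Fintype P] (a b : P → ℝ) (γ : ℝ) (hγ : 0 < γ) :
    0 ≤ γ * (a ⬝ᵥ a) + 2 * (a ⬝ᵥ b) + γ⁻¹ * (b ⬝ᵥ b) := by
  have h1 : (0 : ℝ) ≤ (γ • a + b) ⬝ᵥ (γ • a + b) := dotself_nonneg _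
  have h2 : (γ • a + b) ⬝ᵥ (γ • a + b)
      = γ ^ 2 * (a ⬝ᵥ a) + 2 * γ * (a ⬝ᵥ b) + b ⬝ᵥ b := by
    simp only [add_dotProduct, dotProduct_add, smul_dotProduct, dotProduct_smul,
      smul_eq_mul, dotProduct_comm b a]
    ring
  rw [h2] at h1
  have h3 : γ * (γ * (a ⬝ᵥ a) + 2 * (a ⬝ᵥ b) + γ⁻¹ * (b ⬝ᵥ b))
      = γ ^ 2 * (a ⬝ᵥ a) + 2 * γ * (a ⬝ᵥ b) + b ⬝ᵥ b := by
    field_simp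
  nlinarith [h1, h3, hγ]

lemma dot_pythag {P : Type} [Fintype P] (X Y : P → ℝ) (h : X ⬝ᵥ Y = 0)
    (h' : Y ⬝ᵥ X = 0) : (X - Y) ⬝ᵥ (X - Y) = X ⬝ᵥ X + Y ⬝ᵥ Y := by
  rw [sub_dotProduct, dotProduct_sub, dotProduct_sub, h, h']
  ring

lemma core_sproc {κ P : Type} [Fintype κ] [Fintype P] [DecidableEq κ]
    (E : Matrix P κ ℝ) (hE : ∀ xv : κ → ℝ, E *ᵥ xv = 0 → xv = 0)
    (e : P → ℝ) (Φ : ℝ) (a₀ : ℝ) (l : κ → ℝ)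
    (h1 : ∃ w : κ → ℝ, (e - E *ᵥ w) ⬝ᵥ (e - E *ᵥ w) ≤ Φ)
    (h2 : ∀ w : κ → ℝ, (e - E *ᵥ w) ⬝ᵥ (e - E *ᵥ w) ≤ Φ → 0 < a₀ + 2 * (l ⬝ᵥ w)) :
    ∃ γ β : ℝ, 0 ≤ γ ∧ 0 < β ∧ ∀ w : κ → ℝ,
      0 ≤ a₀ + 2 * (l ⬝ᵥ w) - β - γ * (Φ - (e - E *ᵥ w) ⬝ᵥ (e - E *ᵥ w)) := by
  classical
  set S : Matrix κ κ ℝ := Eᵀ * E with hSdef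
  have hkey : ∀ x y : κ → ℝ, x ⬝ᵥ (S *ᵥ y) = (E *ᵥ x) ⬝ᵥ (E *ᵥ y) := by
    intro x y
    rw [hSdef, ← mulVec_mulVec, dotProduct_mulVec, vecMul_transpose]
  have hS : S.PosDef := by
    refine posDef_iff_dotProduct_mulVec.mpr ⟨by simpa [conjTranspose_eq_transpose_of_trivial] using isHermitian_conjTranspose_mul_self E, fun x hx => ?_⟩
    have hx' : E *ᵥ x ≠ 0 := fun h => hx (hE x h)
    have := dotself_pos hx'
    rw [show star x = x from star_trivial x, hkey]
    exact this
  have hdet : IsUnit S.det := hS.det_pos.ne'.isUnit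
  have hSS : ∀ y : κ → ℝ, S *ᵥ (S⁻¹ *ᵥ y) = y := by
    intro y
    rw [mulVec_mulVec, Matrix.mul_nonsing_inv _ hdet, one_mulVec]
  set vb : κ → ℝ := S⁻¹ *ᵥ (Eᵀ *ᵥ e) with hvb
  have hcross : ∀ u : κ → ℝ, (e - E *ᵥ vb) ⬝ᵥ (E *ᵥ u) = 0 := by
    intro u
    rw [dotProduct_mulVec, ← mulVec_transpose, mulVec_sub, mulVec_mulVec,
      show Eᵀ * E = S from rfl, hvb, hSS]
    simp
  have hpsi : ∀ w : κ → ℝ, (e - E *ᵥ w) ⬝ᵥ (e - E *ᵥ w)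
      = (e - E *ᵥ vb) ⬝ᵥ (e - E *ᵥ vb)
        + (E *ᵥ (w - vb)) ⬝ᵥ (E *ᵥ (w - vb)) := by
    intro w
    have hw : e - E *ᵥ w = (e - E *ᵥ vb) - E *ᵥ (w - vb) := by
      rw [mulVec_sub]; abel
    rw [hw]
    exact dot_pythag _ _ (hcross (w - vb))
      (by rw [dotProduct_comm]; exact hcross (w - vb))
  set ψ0 : ℝ := (e - E *ᵥ vb) ⬝ᵥ (e - E *ᵥ vb) with hψ0
  set c : ℝ := Φ - ψ0 with hcdef
  obtain ⟨w₀, hw₀⟩ := h1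
  have hc : 0 ≤ c := by
    have := hpsi w₀
    have h4 := dotself_nonneg (E *ᵥ (w₀ - vb))
    rw [hcdef]; linarith [hw₀, this.symm.le]
  have hψvb : (e - E *ᵥ vb) ⬝ᵥ (e - E *ᵥ vb) ≤ Φ := by rw [← hψ0]; linarith
  by_cases hl : l = 0
  · refine ⟨0, a₀, le_refl 0, ?_, ?_⟩
    · have := h2 vb hψvb
      rw [hl] at this
      simpa using this
    · intro w
      rw [hl]
      simp
  · set d : κ → ℝ := S⁻¹ *ᵥ l with hdd
    have hd : S *ᵥ d = l := hSS l
    have hd0 : E *ᵥ d ≠ 0 := by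
      intro h
      exact hl (by rw [← hd, hE d h, mulVec_zero])
    set q : ℝ := (E *ᵥ d) ⬝ᵥ (E *ᵥ d) with hqdef
    have hqpos : 0 < q := dotself_pos hd0
    have hlu : ∀ u : κ → ℝ, l ⬝ᵥ u = (E *ᵥ u) ⬝ᵥ (E *ᵥ d) := by
      intro u
      rw [← hd, dotProduct_comm, hkey]
    have hld : l ⬝ᵥ d = q := by rw [hlu d]
    set μ : ℝ := a₀ + 2 * (l ⬝ᵥ vb) with hμdef
    -- expansion identity
    have expand : ∀ (γ β : ℝ) (w : κ → ℝ),
        a₀ + 2 * (l ⬝ᵥ w) - β - γ * (Φ - (e - E *ᵥ w) ⬝ᵥ (e - E *ᵥ w))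
          = (γ * ((E *ᵥ (w - vb)) ⬝ᵥ (E *ᵥ (w - vb)))
              + 2 * ((E *ᵥ (w - vb)) ⬝ᵥ (E *ᵥ d)) + γ⁻¹ * q)
            + (μ - β - γ * c - γ⁻¹ * q) := by
      intro γ β w
      have e1 : l ⬝ᵥ w = l ⬝ᵥ vb + l ⬝ᵥ (w - vb) := by
        rw [dotProduct_sub]; ring
      rw [e1, hpsi w, hlu (w - vb), hμdef, hcdef]
      ring
    -- minimizer of the affine function over the ellipsoid
    have hsq : Real.sqrt q ≠ 0 := by positivity
    set t : ℝ := Real.sqrt c / Real.sqrt q with htdef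
    have ht2 : t ^ 2 * q = c := by
      rw [htdef, div_pow, Real.sq_sqrt hc, Real.sq_sqrt hqpos.le,
        div_mul_eq_mul_div, mul_div_assoc, div_self hqpos.ne', mul_one]
    have hψw : (e - E *ᵥ (vb - t • d)) ⬝ᵥ (e - E *ᵥ (vb - t • d)) ≤ Φ := by
      rw [hpsi (vb - t • d)]
      have h5 : vb - t • d - vb = (-t) • d := by ext i; simp
      rw [h5, mulVec_smul, smul_dotProduct, dotProduct_smul, ← hqdef]
      simp only [smul_eq_mul]
      have h6 : (-t) * ((-t) * q) = t ^ 2 * q := by ring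
      rw [h6, ht2]
      linarith [hcdef]
    have hmin := h2 _ hψw
    have hmin' : 0 < μ - 2 * (t * q) := by
      have e2 : l ⬝ᵥ (vb - t • d) = l ⬝ᵥ vb - t * q := by
        rw [dotProduct_sub, dotProduct_smul, hld]; simp
      rw [e2] at hmin
      rw [hμdef]; linarith
    have htq : t * q = Real.sqrt c * Real.sqrt q := by
      rw [htdef, div_mul_eq_mul_div, div_eq_iff hsq, mul_assoc, Real.mul_self_sqrt hqpos.le]
    by_cases hc0 : c = 0
    · have hμpos : 0 < μ := by
        have h7 : t * q = 0 := by rw [htq, hc0, Real.sqrt_zero, zero_mul]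
        nlinarith [hmin']
      refine ⟨2 * q / μ, μ / 2, by positivity, by positivity, fun w => ?_⟩
      rw [expand]
      have hγpos : 0 < 2 * q / μ := by positivity
      have hconst : μ - μ / 2 - (2 * q / μ) * c - (2 * q / μ)⁻¹ * q = 0 := by
        have h9 : (2 * q / μ)⁻¹ * q = μ / 2 := by
          have hq0 : q ≠ 0 := hqpos.ne'
          have hμ0 : μ ≠ 0 := hμpos.ne'
          field_simp
        rw [hc0, mul_zero, h9]
        ring
      rw [hconst, add_zero]
      exact sq_nonneg_dot _ _ _ hγpos
    · have hcpos : 0 < c := lt_of_le_of_ne hc (Ne.symm hc0)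
      have hsc : Real.sqrt c ≠ 0 := by positivity
      refine ⟨Real.sqrt q / Real.sqrt c, μ - 2 * (Real.sqrt c * Real.sqrt q),
        by positivity, by rw [← htq]; linarith, fun w => ?_⟩
      rw [expand]
      have hγpos : 0 < Real.sqrt q / Real.sqrt c := by positivity
      have hc2 : Real.sqrt c * Real.sqrt c = c := Real.mul_self_sqrt hcpos.le
      have hq2 : Real.sqrt q * Real.sqrt q = q := Real.mul_self_sqrt hqpos.le
      have hc2' : Real.sqrt c * Real.sqrt c = Φ - ψ0 := by rw [hc2, hcdef]
      have e3 : (Real.sqrt q / Real.sqrt c) * c = Real.sqrt c * Real.sqrt q := by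
        field_simp
        linear_combination (-1) * hc2'
      have e4 : (Real.sqrt q / Real.sqrt c)⁻¹ * q = Real.sqrt c * Real.sqrt q := by
        rw [inv_div]
        field_simp
        linear_combination (-1) * hq2
      have hconst : μ - (μ - 2 * (Real.sqrt c * Real.sqrt q))
          - (Real.sqrt q / Real.sqrt c) * c - (Real.sqrt q / Real.sqrt c)⁻¹ * q = 0 := by
        rw [e3, e4]
        ring
      rw [hconst, add_zero]
      exact sq_nonneg_dot _ _ _ hγpos

end Core

section Helpers7

open Matrix

variable {n f g T : ℕ}

lemma dot_sq {P : Type} [Fintype P] (u : P → ℝ) : u ⬝ᵥ u = ∑ p, u p ^ 2 := by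
  simp [dotProduct, sq]

lemma Rmat_qf (Xd : Matrix (Fin n) (Fin T) ℝ) (Fd : Matrix (Fin f) (Fin T) ℝ)
    (Hd : Matrix (Fin g) (Fin T) ℝ) (Φ11 γ β a₀ : ℝ) (s : Finset (ParamIdx n f g))
    (vs : {i // i ∈ s} → ℝ) (l : {i // i ∈ sᶜ} → ℝ) (z : Unit ⊕ {i // i ∈ sᶜ} → ℝ) :
    z ⬝ᵥ ((bmatI a₀ l 0 - γ • Nmat Xd Fd Hd Φ11 s vs - bmatI β 0 0) *ᵥ z)
      = a₀ * z (Sum.inl ()) ^ 2 + 2 * z (Sum.inl ()) * (l ⬝ᵥ fun j => z (Sum.inr j))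
        - β * z (Sum.inl ()) ^ 2
        - γ * (Φ11 * z (Sum.inl ()) ^ 2
            - ∑ p : Fin n × Fin T,
                (z (Sum.inl ()) * (Xd p.1 p.2
                    - (((Dmat Fd Hd).submatrix (fun i : {i // i ∈ s} => i.1) id)ᵀ *ᵥ vs) p)
                  - (((Dmat Fd Hd).submatrix (fun i : {i // i ∈ sᶜ} => i.1) id)ᵀ *ᵥ
                      fun j => z (Sum.inr j)) p) ^ 2) := by
  rw [sub_mulVec, sub_mulVec, dotProduct_sub, dotProduct_sub, smul_mulVec,
    dotProduct_smul, bmatI_qf, bmatI_qf, Nmat_qf]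
  simp only [smul_eq_mul, zero_dotProduct]
  ring

lemma resid_sum_eq (Xd : Matrix (Fin n) (Fin T) ℝ) (Fd : Matrix (Fin f) (Fin T) ℝ)
    (Hd : Matrix (Fin g) (Fin T) ℝ) (s : Finset (ParamIdx n f g)) (vs : {i // i ∈ s} → ℝ)
    (A : Matrix (Fin n) (Fin f) ℝ) (B : Matrix (Fin n) (Fin g) ℝ)
    (hs : ∀ i : {i // i ∈ s}, paramVec A B i.1 = vs i)
    (w : {i // i ∈ sᶜ} → ℝ) (hw : ∀ j : {i // i ∈ sᶜ}, paramVec A B j.1 = w j) :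
    (((fun p : Fin n × Fin T => Xd p.1 p.2
          - (((Dmat Fd Hd).submatrix (fun i : {i // i ∈ s} => i.1) id)ᵀ *ᵥ vs) p)
        - ((Dmat Fd Hd).submatrix (fun i : {i // i ∈ sᶜ} => i.1) id)ᵀ *ᵥ w) ⬝ᵥ
      ((fun p : Fin n × Fin T => Xd p.1 p.2
          - (((Dmat Fd Hd).submatrix (fun i : {i // i ∈ s} => i.1) id)ᵀ *ᵥ vs) p)
        - ((Dmat Fd Hd).submatrix (fun i : {i // i ∈ sᶜ} => i.1) id)ᵀ *ᵥ w))
      = ∑ i, ∑ t, (Xd i t - (A * Fd + B * Hd) i t) ^ 2 := by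
  rw [dot_sq, Fintype.sum_prod_type]
  refine Finset.sum_congr rfl fun i _ => Finset.sum_congr rfl fun t _ => ?_
  have h1 := resid_eq Xd Fd Hd s vs A B hs w hw (i, t)
  rw [Pi.sub_apply]
  simp only []
  exact congrArg (fun r : ℝ => r ^ 2) h1.symm

end Helpers7

section Helpers8

open Matrix

variable {n f g T : ℕ}

lemma psd_of_core (Xd : Matrix (Fin n) (Fin T) ℝ) (Fd : Matrix (Fin f) (Fin T) ℝ)
    (Hd : Matrix (Fin g) (Fin T) ℝ) (Φ11 : ℝ) (s : Finset (ParamIdx n f g))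
    (vs : {i // i ∈ s} → ℝ) (a₀ : ℝ) (l : {i // i ∈ sᶜ} → ℝ) (γ β : ℝ) (hγ : 0 ≤ γ)
    (hall : ∀ w : {i // i ∈ sᶜ} → ℝ,
      0 ≤ a₀ + 2 * (l ⬝ᵥ w) - β
        - γ * (Φ11 - (((fun p : Fin n × Fin T => Xd p.1 p.2
              - (((Dmat Fd Hd).submatrix (fun i : {i // i ∈ s} => i.1) id)ᵀ *ᵥ vs) p)
            - ((Dmat Fd Hd).submatrix (fun i : {i // i ∈ sᶜ} => i.1) id)ᵀ *ᵥ w) ⬝ᵥ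
            ((fun p : Fin n × Fin T => Xd p.1 p.2
              - (((Dmat Fd Hd).submatrix (fun i : {i // i ∈ s} => i.1) id)ᵀ *ᵥ vs) p)
            - ((Dmat Fd Hd).submatrix (fun i : {i // i ∈ sᶜ} => i.1) id)ᵀ *ᵥ w)))) :
    (bmatI a₀ l 0 - γ • Nmat Xd Fd Hd Φ11 s vs - bmatI β 0 0).PosSemidef := by
  refine PosSemidef.of_dotProduct_mulVec_nonneg ?_ ?_
  · exact ((bmatI_herm a₀ l).sub (herm_smul γ (Nmat_herm Xd Fd Hd Φ11 s vs))).sub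
      (bmatI_herm β 0)
  · intro z
    have hz : star z = z := star_trivial z
    rw [hz, Rmat_qf]
    rcases eq_or_ne (z (Sum.inl ())) 0 with h0 | h0
    · rw [h0]
      have hnn : (0:ℝ) ≤ ∑ p : Fin n × Fin T,
          ((0:ℝ) * (Xd p.1 p.2
              - (((Dmat Fd Hd).submatrix (fun i : {i // i ∈ s} => i.1) id)ᵀ *ᵥ vs) p)
            - (((Dmat Fd Hd).submatrix (fun i : {i // i ∈ sᶜ} => i.1) id)ᵀ *ᵥ
                fun j => z (Sum.inr j)) p) ^ 2 :=
        Finset.sum_nonneg fun p _ => sq_nonneg _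
      nlinarith [mul_nonneg hγ hnn]
    · set w' : {i // i ∈ sᶜ} → ℝ := (z (Sum.inl ()))⁻¹ • (fun j => z (Sum.inr j)) with hw'
      have hEw' : ((Dmat Fd Hd).submatrix (fun i : {i // i ∈ sᶜ} => i.1) id)ᵀ *ᵥ w'
          = (z (Sum.inl ()))⁻¹ • (((Dmat Fd Hd).submatrix
              (fun i : {i // i ∈ sᶜ} => i.1) id)ᵀ *ᵥ fun j => z (Sum.inr j)) := by
        rw [hw', mulVec_smul]
      have hEw : ∀ p : Fin n × Fin T,
          (((Dmat Fd Hd).submatrix (fun i : {i // i ∈ sᶜ} => i.1) id)ᵀ *ᵥ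
            fun j => z (Sum.inr j)) p
          = z (Sum.inl ()) * (((Dmat Fd Hd).submatrix
              (fun i : {i // i ∈ sᶜ} => i.1) id)ᵀ *ᵥ w') p := by
        intro p
        rw [hEw', Pi.smul_apply, smul_eq_mul, ← mul_assoc, mul_inv_cancel₀ h0, one_mul]
      have hlw : (l ⬝ᵥ fun j => z (Sum.inr j)) = z (Sum.inl ()) * (l ⬝ᵥ w') := by
        rw [hw', dotProduct_smul, smul_eq_mul, ← mul_assoc, mul_inv_cancel₀ h0, one_mul]
      have key := hall w'
      have hsum : ∑ p : Fin n × Fin T,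
          (z (Sum.inl ()) * (Xd p.1 p.2
              - (((Dmat Fd Hd).submatrix (fun i : {i // i ∈ s} => i.1) id)ᵀ *ᵥ vs) p)
            - (((Dmat Fd Hd).submatrix (fun i : {i // i ∈ sᶜ} => i.1) id)ᵀ *ᵥ
                fun j => z (Sum.inr j)) p) ^ 2
          = z (Sum.inl ()) ^ 2 * (((fun p : Fin n × Fin T => Xd p.1 p.2
                - (((Dmat Fd Hd).submatrix (fun i : {i // i ∈ s} => i.1) id)ᵀ *ᵥ vs) p)
              - ((Dmat Fd Hd).submatrix (fun i : {i // i ∈ sᶜ} => i.1) id)ᵀ *ᵥ w') ⬝ᵥ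
              ((fun p : Fin n × Fin T => Xd p.1 p.2
                - (((Dmat Fd Hd).submatrix (fun i : {i // i ∈ s} => i.1) id)ᵀ *ᵥ vs) p)
              - ((Dmat Fd Hd).submatrix (fun i : {i // i ∈ sᶜ} => i.1) id)ᵀ *ᵥ w')) := by
        rw [dot_sq, Finset.mul_sum]
        refine Finset.sum_congr rfl fun p _ => ?_
        rw [hEw p, Pi.sub_apply]
        ring
      rw [hlw, hsum]
      nlinarith [mul_nonneg (sq_nonneg (z (Sum.inl ()))) key]

end Helpers8

section Helpers9

open Matrix

variable {n f g T : ℕ}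

lemma construct_AB (s : Finset (ParamIdx n f g)) (vs : {i // i ∈ s} → ℝ)
    (w : {i // i ∈ sᶜ} → ℝ) :
    ∃ AB : Matrix (Fin n) (Fin f) ℝ × Matrix (Fin n) (Fin g) ℝ,
      (∀ i : {i // i ∈ s}, paramVec AB.1 AB.2 i.1 = vs i) ∧
      (∀ j : {i // i ∈ sᶜ}, paramVec AB.1 AB.2 j.1 = w j) := by
  classical
  set v : ParamIdx n f g → ℝ := fun p =>
    if hp : p ∈ s then vs ⟨p, hp⟩ else w ⟨p, Finset.mem_compl.mpr hp⟩ with hv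
  refine ⟨(Matrix.of fun i a => v (Sum.inl (i, a)), Matrix.of fun i b => v (Sum.inr (i, b))),
    ?_, ?_⟩
  · intro i
    have : paramVec (Matrix.of fun i a => v (Sum.inl (i, a)))
        (Matrix.of fun i b => v (Sum.inr (i, b))) i.1 = v i.1 := by
      rcases i with ⟨p, hp⟩
      rcases p with ⟨ia, a⟩ | ⟨ib, b⟩ <;> simp [paramVec]
    rw [this, hv]
    simp [i.2]
  · intro j
    have : paramVec (Matrix.of fun i a => v (Sum.inl (i, a)))
        (Matrix.of fun i b => v (Sum.inr (i, b))) j.1 = v j.1 := by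
      rcases j with ⟨p, hp⟩
      rcases p with ⟨ia, a⟩ | ⟨ib, b⟩ <;> simp [paramVec]
    rw [this, hv]
    have hjs : j.1 ∉ s := Finset.mem_compl.mp j.2
    simp [hjs]

end Helpers9


/-- **multiplier characterization of informativity for closed-loop
stability.**  Under the full row rank assumption on `[𝓕; 𝓗]` and nonemptiness of
`Σ`, the data are informative for closed-loop stability with respect to `K` iff there
exist a radially unbounded `V ∈ 𝒱` and functions `γ, β : ℝⁿ → ℝ` such that for all
`x ≠ 0`: `γ(x) ≥ 0`, `β(x) > 0`, and the matrix
`[[2 L_sᵀ(x) v_s, L_s̄ᵀ(x)], [L_s̄(x), 0]] − γ(x) N − [[β(x), 0], [0, 0]]`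
is positive semidefinite. -/
theorem informativeCL_iff_multiplier {n m f g T : ℕ} (hn : 0 < n) (hm : 0 < m)
    (hf : 0 < f) (hg : 0 < g) (hT : 0 < T) (Xd : Matrix (Fin n) (Fin T) ℝ)
    (Fd : Matrix (Fin f) (Fin T) ℝ) (Hd : Matrix (Fin g) (Fin T) ℝ)
    (Φ11 : ℝ) (hΦ : 0 ≤ Φ11) (s : Finset (ParamIdx n f g)) (vs : {i // i ∈ s} → ℝ)
    (Fp : Fin f → MvPolynomial (Fin n) ℝ)
    (hFp0 : ∀ a, eval (0 : Fin n → ℝ) (Fp a) = 0)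
    (Gp : Fin g → Fin m → MvPolynomial (Fin n) ℝ)
    (K : (Fin n → ℝ) → Fin m → ℝ) (hK : Continuous K) (hK0 : K 0 = 0)
    (hrank : (Matrix.fromRows Fd Hd).rank = f + g)
    (hSig : (SigmaSet Xd Fd Hd Φ11 s vs).Nonempty) :
    InformativeCL Xd Fd Hd Φ11 s vs Fp Gp K ↔
      ∃ V : MvPolynomial (Fin n) ℝ, IsLyapCandidate V ∧
        ∃ γ β : (Fin n → ℝ) → ℝ, ∀ x : Fin n → ℝ, x ≠ 0 →
          0 ≤ γ x ∧ 0 < β x ∧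
          (let N := Nmat Xd Fd Hd Φ11 s vs
           let Ls : {i // i ∈ s} → ℝ := fun i => Lvec Fp Gp K V x i.1
           let Lsb : {i // i ∈ sᶜ} → ℝ := fun i => Lvec Fp Gp K V x i.1
           bmatI (2 * (Ls ⬝ᵥ vs)) Lsb 0 - γ x • N - bmatI (β x) 0 0).PosSemidef := by
  classical
  constructor
  · rintro ⟨V, hV, hder⟩
    refine ⟨V, hV, ?_⟩
    have key : ∀ x : Fin n → ℝ, x ≠ 0 → ∃ γβ : ℝ × ℝ, 0 ≤ γβ.1 ∧ 0 < γβ.2 ∧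
        (bmatI (2 * ((fun i : {i // i ∈ s} => Lvec Fp Gp K V x i.1) ⬝ᵥ vs))
            (fun i : {i // i ∈ sᶜ} => Lvec Fp Gp K V x i.1) 0
          - γβ.1 • Nmat Xd Fd Hd Φ11 s vs - bmatI γβ.2 0 0).PosSemidef := by
      intro x hx
      have h2 : ∀ w : {i // i ∈ sᶜ} → ℝ,
          (((fun p : Fin n × Fin T => Xd p.1 p.2
                - (((Dmat Fd Hd).submatrix (fun i : {i // i ∈ s} => i.1) id)ᵀ *ᵥ vs) p)
              - ((Dmat Fd Hd).submatrix (fun i : {i // i ∈ sᶜ} => i.1) id)ᵀ *ᵥ w) ⬝ᵥ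
            ((fun p : Fin n × Fin T => Xd p.1 p.2
                - (((Dmat Fd Hd).submatrix (fun i : {i // i ∈ s} => i.1) id)ᵀ *ᵥ vs) p)
              - ((Dmat Fd Hd).submatrix (fun i : {i // i ∈ sᶜ} => i.1) id)ᵀ *ᵥ w)) ≤ Φ11 →
          0 < 2 * ((fun i : {i // i ∈ s} => Lvec Fp Gp K V x i.1) ⬝ᵥ vs)
            + 2 * ((fun i : {i // i ∈ sᶜ} => Lvec Fp Gp K V x i.1) ⬝ᵥ w) := by
        intro w hw
        obtain ⟨AB, hsAB, hwAB⟩ := construct_AB s vs w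
        have hmem : AB ∈ SigmaSet Xd Fd Hd Φ11 s vs := by
          refine ⟨hsAB, Xd - AB.1 * Fd - AB.2 * Hd, ?_,
            by ext i t; simp only [Matrix.add_apply, Matrix.sub_apply]; ring⟩
          have hres := resid_sum_eq Xd Fd Hd s vs AB.1 AB.2 hsAB w hwAB
          have heq : ∑ i, ∑ t, (Xd - AB.1 * Fd - AB.2 * Hd) i t ^ 2
              = ∑ i, ∑ t, (Xd i t - (AB.1 * Fd + AB.2 * Hd) i t) ^ 2 := by
            refine Finset.sum_congr rfl fun i _ => Finset.sum_congr rfl fun t _ => ?_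
            simp only [Matrix.sub_apply, Matrix.add_apply]
            ring
          rw [heq, ← hres]
          exact hw
        have hlt := hder x hx AB hmem
        rw [derivSum_eq Fp Gp K V x AB.1 AB.2,
          sum_split s (Lvec Fp Gp K V x) (paramVec AB.1 AB.2)] at hlt
        rw [show (fun i : {i // i ∈ s} => paramVec AB.1 AB.2 i.1) = vs from funext hsAB,
          show (fun j : {i // i ∈ sᶜ} => paramVec AB.1 AB.2 j.1) = w from funext hwAB] at hlt
        linarith
      have h1 : ∃ w : {i // i ∈ sᶜ} → ℝ,
          (((fun p : Fin n × Fin T => Xd p.1 p.2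
                - (((Dmat Fd Hd).submatrix (fun i : {i // i ∈ s} => i.1) id)ᵀ *ᵥ vs) p)
              - ((Dmat Fd Hd).submatrix (fun i : {i // i ∈ sᶜ} => i.1) id)ᵀ *ᵥ w) ⬝ᵥ
            ((fun p : Fin n × Fin T => Xd p.1 p.2
                - (((Dmat Fd Hd).submatrix (fun i : {i // i ∈ s} => i.1) id)ᵀ *ᵥ vs) p)
              - ((Dmat Fd Hd).submatrix (fun i : {i // i ∈ sᶜ} => i.1) id)ᵀ *ᵥ w)) ≤ Φ11 := by
        obtain ⟨AB₀, hs₀, W₀, hW₀, hXd₀⟩ := hSig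
        refine ⟨fun j => paramVec AB₀.1 AB₀.2 j.1, ?_⟩
        rw [resid_sum_eq Xd Fd Hd s vs AB₀.1 AB₀.2 hs₀ _ (fun j => rfl)]
        have heq : ∑ i, ∑ t, (Xd i t - (AB₀.1 * Fd + AB₀.2 * Hd) i t) ^ 2
            = ∑ i, ∑ t, W₀ i t ^ 2 := by
          refine Finset.sum_congr rfl fun i _ => Finset.sum_congr rfl fun t _ => ?_
          rw [hXd₀]
          simp only [Matrix.add_apply]
          ring
        rw [heq]
        exact hW₀
      obtain ⟨γ, β, hγ, hβ, hall⟩ :=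
        core_sproc (((Dmat Fd Hd).submatrix (fun i : {i // i ∈ sᶜ} => i.1) id)ᵀ)
          (Esub_inj Fd Hd hrank s)
          (fun p : Fin n × Fin T => Xd p.1 p.2
            - (((Dmat Fd Hd).submatrix (fun i : {i // i ∈ s} => i.1) id)ᵀ *ᵥ vs) p)
          Φ11 (2 * ((fun i : {i // i ∈ s} => Lvec Fp Gp K V x i.1) ⬝ᵥ vs))
          (fun i : {i // i ∈ sᶜ} => Lvec Fp Gp K V x i.1) h1 h2
      exact ⟨(γ, β), hγ, hβ, psd_of_core Xd Fd Hd Φ11 s vs _ _ γ β hγ hall⟩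
    refine ⟨fun x => if h : x = 0 then 0 else (key x h).choose.1,
      fun x => if h : x = 0 then 0 else (key x h).choose.2, ?_⟩
    intro x hx
    simp only [dif_neg hx]
    obtain ⟨hγ, hβ, hpsd⟩ := (key x hx).choose_spec
    exact ⟨hγ, hβ, hpsd⟩
  · rintro ⟨V, hV, γf, βf, hmat⟩
    refine ⟨V, hV, ?_⟩
    intro x hx AB hmemAB
    obtain ⟨hγ, hβ, hpsd⟩ := hmat x hx
    have hpsd' : (bmatI (2 * ((fun i : {i // i ∈ s} => Lvec Fp Gp K V x i.1) ⬝ᵥ vs))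
        (fun i : {i // i ∈ sᶜ} => Lvec Fp Gp K V x i.1) 0
        - γf x • Nmat Xd Fd Hd Φ11 s vs - bmatI (βf x) 0 0).PosSemidef := hpsd
    have hq := hpsd'.dotProduct_mulVec_nonneg (Sum.elim (fun _ => (1:ℝ)) (fun j => paramVec AB.1 AB.2 j.1))
    rw [star_trivial, Rmat_qf] at hq
    simp only [Sum.elim_inl, Sum.elim_inr, one_pow, mul_one, one_mul] at hq
    obtain ⟨hsAB, W, hWb, hXd⟩ := hmemAB
    have hres := resid_sum_eq Xd Fd Hd s vs AB.1 AB.2 hsAB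
      (fun j => paramVec AB.1 AB.2 j.1) (fun j => rfl)
    have hbridge : ∑ p : Fin n × Fin T,
        ((Xd p.1 p.2 - (((Dmat Fd Hd).submatrix (fun i : {i // i ∈ s} => i.1) id)ᵀ *ᵥ vs) p)
          - (((Dmat Fd Hd).submatrix (fun i : {i // i ∈ sᶜ} => i.1) id)ᵀ *ᵥ
              fun j => paramVec AB.1 AB.2 j.1) p) ^ 2
        = ∑ i, ∑ t, (Xd i t - (AB.1 * Fd + AB.2 * Hd) i t) ^ 2 := by
      rw [← hres, dot_sq]
      exact Finset.sum_congr rfl fun p _ => by rw [Pi.sub_apply]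
    have hWsum : ∑ i, ∑ t, (Xd i t - (AB.1 * Fd + AB.2 * Hd) i t) ^ 2 ≤ Φ11 := by
      have heq : ∑ i, ∑ t, (Xd i t - (AB.1 * Fd + AB.2 * Hd) i t) ^ 2
          = ∑ i, ∑ t, W i t ^ 2 := by
        refine Finset.sum_congr rfl fun i _ => Finset.sum_congr rfl fun t _ => ?_
        rw [hXd]
        simp only [Matrix.add_apply]
        ring
      rw [heq]
      exact hWb
    rw [hbridge] at hq
    have hmul : 0 ≤ γf x * (Φ11 - ∑ i, ∑ t, (Xd i t - (AB.1 * Fd + AB.2 * Hd) i t) ^ 2) :=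
      mul_nonneg hγ (by linarith)
    rw [derivSum_eq Fp Gp K V x AB.1 AB.2,
      sum_split s (Lvec Fp Gp K V x) (paramVec AB.1 AB.2),
      show (fun i : {i // i ∈ s} => paramVec AB.1 AB.2 i.1) = vs from funext hsAB]
    linarith
end
end

section
/- For every real p > 0, every real q, and all polynomials J₁, J₂ ∈ ℝ[x₁, x₂], there exists a point x = (x₁, x₂) ∈ ℝ² such that q − p·x₁ + (J₁(x) − J₂(x))·(p·x₂ − q·x₁) < 0. (In particular, the polynomial q − p·x₁ + (J₁(x) − J₂(x))·(p·x₂ − q·x₁) cannot be nonnegative on all of ℝ².) -/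
/-! On the line `p x₂ = q x₁` the term carrying `J₁ - J₂` vanishes, whatever the multiplier is,
and along that line `q - p x₁` takes every real value, in particular `-1`. -/

theorem exists_neg_of_ne_zero {p : ℝ} (q : ℝ) (hp : p ≠ 0) (g : (Fin 2 → ℝ) → ℝ) :
    ∃ x : Fin 2 → ℝ, q - p * x 0 + g x * (p * x 1 - q * x 0) < 0 := by
  set x : Fin 2 → ℝ := ![(q + 1) / p, q * (q + 1) / p ^ 2]
  have h_first : q - p * x 0 = -1 := by
    simp only [x, Matrix.cons_val_zero]
    field_simp
    ring
  have h_line : p * x 1 - q * x 0 = 0 := by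
    simp only [x, Matrix.cons_val_zero, Matrix.cons_val_one]
    field_simp
    ring
  exact ⟨x, by rw [h_first, h_line, mul_zero, add_zero]; norm_num⟩

/-- For every real `p > 0`, every real `q`, and all polynomials
`J₁, J₂ ∈ ℝ[x₁, x₂]`, there exists a point `x ∈ ℝ²` at which
`q - p·x₁ + (J₁(x) - J₂(x))·(p·x₂ - q·x₁)` is negative. -/
theorem exists_neg_point (p q : ℝ) (hp : 0 < p) (J1 J2 : MvPolynomial (Fin 2) ℝ) :
    ∃ x : Fin 2 → ℝ,
      q - p * x 0 + (MvPolynomial.eval x J1 - MvPolynomial.eval x J2) *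
        (p * x 1 - q * x 0) < 0 :=
  exists_neg_of_ne_zero q hp.ne' fun x => MvPolynomial.eval x J1 - MvPolynomial.eval x J2
end

section
/- Define f : ℝ² → ℝ² by f(x₁, x₂) = (x₂ − x₁², −2x₁ − 2x₂ + 2x₁² + 2x₁x₂ − 2x₁³) and V : ℝ² → ℝ by V(x₁, x₂) = x₁² + (x₁ + x₂ − x₁²)². Then: (a) for all (x₁, x₂) ∈ ℝ², the directional derivative of V along f satisfies (∂V/∂x₁)(x)·f₁(x) + (∂V/∂x₂)(x)·f₂(x) = −2x₁² − 2(x₁ + x₂ − x₁²)², which is strictly negative for all x ≠ 0; (b) V(0) = 0 and V(x) > 0 for all x ≠ 0; (c) V is radially unbounded, i.e., V(x) → ∞ as ‖x‖ → ∞. -/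
open Filter

/-- The closed-loop vector field `f(x₁, x₂) = (x₂ - x₁², -2x₁ - 2x₂ + 2x₁² + 2x₁x₂ - 2x₁³)`. -/
noncomputable def fcl : ℝ × ℝ → ℝ × ℝ := fun x =>
  (x.2 - x.1 ^ 2, -2 * x.1 - 2 * x.2 + 2 * x.1 ^ 2 + 2 * x.1 * x.2 - 2 * x.1 ^ 3)

/-- The Lyapunov candidate `V(x₁, x₂) = x₁² + (x₁ + x₂ - x₁²)²`. -/
noncomputable def Vlyap : ℝ × ℝ → ℝ := fun x => x.1 ^ 2 + (x.1 + x.2 - x.1 ^ 2) ^ 2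

lemma deriv1 (a b : ℝ) :
    deriv (fun t : ℝ => t ^ 2 + (t + b - t ^ 2) ^ 2) a
      = 2 * a + 2 * (a + b - a ^ 2) * (1 - 2 * a) := by
  have h1 : HasDerivAt (fun t : ℝ => t + b - t ^ 2) (1 - 2 * a) a := by
    have := ((hasDerivAt_id a).add_const b).sub (hasDerivAt_pow 2 a)
    exact this.congr_deriv (by ring)
  have h2 : HasDerivAt (fun t : ℝ => t ^ 2 + (t + b - t ^ 2) ^ 2)
      (2 * a + 2 * (a + b - a ^ 2) * (1 - 2 * a)) a := by
    have hp := (hasDerivAt_pow 2 a).add (h1.pow 2)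
    exact hp.congr_deriv (by ring)
  exact h2.deriv

lemma deriv2 (a b : ℝ) :
    deriv (fun t : ℝ => a ^ 2 + (a + t - a ^ 2) ^ 2) b
      = 2 * (a + b - a ^ 2) := by
  have h1 : HasDerivAt (fun t : ℝ => a + t - a ^ 2) 1 b := by
    simpa using ((hasDerivAt_id b).const_add a).sub_const (a ^ 2)
  have h2 : HasDerivAt (fun t : ℝ => a ^ 2 + (a + t - a ^ 2) ^ 2)
      (2 * (a + b - a ^ 2)) b := by
    have hp := (hasDerivAt_const b (a ^ 2)).add (h1.pow 2)
    exact hp.congr_deriv (by ring)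
  exact h2.deriv

/-- (a) The directional derivative of `V` along `f` equals
`-2x₁² - 2(x₁ + x₂ - x₁²)²` and is negative for all `x ≠ 0`; (b) `V(0) = 0` and
`V(x) > 0` for `x ≠ 0`; (c) `V` is radially unbounded. -/
theorem lyapunov_verification :
    (∀ x : ℝ × ℝ,
      deriv (fun t => Vlyap (t, x.2)) x.1 * (fcl x).1 +
        deriv (fun t => Vlyap (x.1, t)) x.2 * (fcl x).2 =
          -2 * x.1 ^ 2 - 2 * (x.1 + x.2 - x.1 ^ 2) ^ 2) ∧
    (∀ x : ℝ × ℝ, x ≠ 0 →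
      deriv (fun t => Vlyap (t, x.2)) x.1 * (fcl x).1 +
        deriv (fun t => Vlyap (x.1, t)) x.2 * (fcl x).2 < 0) ∧
    Vlyap 0 = 0 ∧ (∀ x : ℝ × ℝ, x ≠ 0 → 0 < Vlyap x) ∧
    Tendsto Vlyap (cocompact (ℝ × ℝ)) atTop := by
  have key : ∀ x : ℝ × ℝ,
      deriv (fun t => Vlyap (t, x.2)) x.1 * (fcl x).1 +
        deriv (fun t => Vlyap (x.1, t)) x.2 * (fcl x).2 =
          -2 * x.1 ^ 2 - 2 * (x.1 + x.2 - x.1 ^ 2) ^ 2 := by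
    intro x
    simp only [Vlyap, fcl, deriv1, deriv2]
    ring
  have hne : ∀ x : ℝ × ℝ, x ≠ 0 → x.1 ≠ 0 ∨ (x.1 + x.2 - x.1 ^ 2) ≠ 0 := by
    intro x hx
    by_contra h
    push_neg at h
    obtain ⟨h1, h2⟩ := h
    apply hx
    have hx2 : x.2 = 0 := by nlinarith [h1, h2]
    exact Prod.ext h1 hx2
  have hpos : ∀ x : ℝ × ℝ, x ≠ 0 → 0 < x.1 ^ 2 + (x.1 + x.2 - x.1 ^ 2) ^ 2 := by
    intro x hx
    rcases hne x hx with h | h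
    · have : 0 < x.1 ^ 2 := by positivity
      nlinarith [sq_nonneg (x.1 + x.2 - x.1 ^ 2)]
    · have : 0 < (x.1 + x.2 - x.1 ^ 2) ^ 2 := by positivity
      nlinarith [sq_nonneg x.1]
  refine ⟨key, ?_, by simp [Vlyap], fun x hx => by simpa [Vlyap] using hpos x hx, ?_⟩
  · intro x hx
    rw [key x]
    have := hpos x hx
    linarith
  · rw [hasBasis_cocompact.tendsto_iff atTop_basis]
    intro b _
    refine ⟨Metric.closedBall 0 (2 * Real.sqrt (max b 0) + max b 0),
      isCompact_closedBall _ _, fun x hx => ?_⟩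
    simp only [Set.mem_compl_iff, Metric.mem_closedBall, dist_zero_right, not_le] at hx
    simp only [Set.mem_Ici]
    by_contra hV
    push_neg at hV
    set c := max b 0 with hc
    have hVc : Vlyap x < c := lt_of_lt_of_le hV (le_max_left _ _)
    have hc0 : 0 ≤ c := le_max_right _ _
    set a := x.1
    set s := x.1 + x.2 - x.1 ^ 2 with hs
    have hV0 : Vlyap x = a ^ 2 + s ^ 2 := rfl
    have ha2 : a ^ 2 < c := by nlinarith [sq_nonneg s]
    have hs2 : s ^ 2 < c := by nlinarith [sq_nonneg a]
    have haabs : |a| ≤ Real.sqrt c := by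
      rw [← Real.sqrt_sq_eq_abs]
      exact Real.sqrt_le_sqrt ha2.le
    have hsabs : |s| ≤ Real.sqrt c := by
      rw [← Real.sqrt_sq_eq_abs]
      exact Real.sqrt_le_sqrt hs2.le
    have hx2 : |x.2| ≤ 2 * Real.sqrt c + c := by
      have : x.2 = s - a + a ^ 2 := by rw [hs]; ring
      rw [this]
      calc |s - a + a ^ 2| ≤ |s| + |a| + |a ^ 2| := by
            calc |s - a + a ^ 2| ≤ |s - a| + |a ^ 2| := abs_add_le _ _
              _ ≤ |s| + |a| + |a ^ 2| := by linarith [abs_sub s a]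
        _ ≤ Real.sqrt c + Real.sqrt c + c := by
            have : |a ^ 2| = a ^ 2 := abs_of_nonneg (sq_nonneg a)
            rw [this]; linarith
        _ = 2 * Real.sqrt c + c := by ring
    have hnorm : ‖x‖ ≤ 2 * Real.sqrt c + c := by
      rw [Prod.norm_def]
      apply max_le
      · calc ‖x.1‖ = |a| := rfl
          _ ≤ Real.sqrt c := haabs
          _ ≤ 2 * Real.sqrt c + c := by
              have := Real.sqrt_nonneg c; linarith
      · simpa [Real.norm_eq_abs] using hx2
    linarith
end
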